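/- Let f : X → X be a continuous map on a compact metric space and suppose the limit set ⋂_{n≥0} f^n(X) is a finite union of pairwise disjoint minimal subsystems Y_1, …, Y_k. Then f has clopen basins: for every clopen set V ⊆ X, the basin B(V) = ⋃_{n≥0} f^{-n}(V) is clopen. -/

import Mathlib

/-!
Let `B = B(V)` and let `B_N` be the points entering `V` within time `N`. Every minimal set `Y`
meeting `B` lies in `B`, because `Y \ B` is closed and forward invariant; by compactness `Y ⊆ B_N`
for some `N`. As there are finitely many `Y i`, the limit set meets `B` only inside some `B_M`.
If entrance times into `V` were unbounded, then for every `n` some point of `f^[n](X)` would enter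
`V` for the first time at time `M + 1`; these points form a decreasing sequence of nonempty closed
sets, and a point of their intersection lies in the limit set and in `B \ B_M`. Hence
`B = B_N` for some `N`, a finite union of clopen sets.
-/

open Set

/-- A minimal subsystem: a nonempty closed invariant set with no nonempty proper
closed invariant subset. -/
def IsMinimalSubsystem {X : Type*} [TopologicalSpace X] (f : X → X) (Y : Set X) : Prop :=
  Y.Nonempty ∧ IsClosed Y ∧ f '' Y ⊆ Y ∧
    ∀ Z ⊆ Y, Z.Nonempty → IsClosed Z → f '' Z ⊆ Z → Z = Y

section Basins

variable {X : Type*} {f : X → X} {V : Set X}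

def basin (f : X → X) (V : Set X) : Set X := ⋃ n : ℕ, f^[n] ⁻¹' V

abbrev basinUpTo (f : X → X) (V : Set X) (N : ℕ) : Set X := accumulate (fun n => f^[n] ⁻¹' V) N

def limitSet (f : X → X) : Set X := ⋂ n : ℕ, range f^[n]

theorem preimage_basin_subset : f ⁻¹' basin f V ⊆ basin f V := by
  intro x hx
  obtain ⟨n, hn⟩ := mem_iUnion.mp hx
  exact mem_iUnion.mpr ⟨n + 1, hn⟩

theorem basinUpTo_subset_basin (N : ℕ) : basinUpTo f V N ⊆ basin f V :=
  accumulate_subset_iUnion N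

theorem range_iterate_add_subset (f : X → X) (n k : ℕ) : range f^[n + k] ⊆ range f^[n] := by
  rintro _ ⟨x, rfl⟩
  exact ⟨f^[k] x, (Function.iterate_add_apply f n k x).symm⟩

theorem exists_mem_range_iterate_first_entrance_succ {x : X} {n M : ℕ} (hx : x ∈ basin f V)
    (hxN : x ∉ basinUpTo f V (n + M)) :
    ∃ z ∈ range f^[n], z ∈ f^[M + 1] ⁻¹' V \ basinUpTo f V M := by
  classical
  have hex : ∃ t, f^[t] x ∈ V := mem_iUnion.mp hx
  set t := Nat.find hex
  have hlt : n + M < t := by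
    by_contra! hle
    exact hxN (mem_accumulate.mpr ⟨t, hle, Nat.find_spec hex⟩)
  obtain ⟨s, hs⟩ : ∃ s, t = M + 1 + (n + s) := ⟨t - (n + M + 1), by omega⟩
  refine ⟨f^[n + s] x, range_iterate_add_subset f n s ⟨x, rfl⟩, ?_, ?_⟩
  · rw [mem_preimage, ← Function.iterate_add_apply, ← hs]
    exact Nat.find_spec hex
  · simp only [mem_accumulate, mem_preimage, not_exists, not_and, ← Function.iterate_add_apply]
    exact fun j hj => Nat.find_min hex (by omega)

variable [TopologicalSpace X]

theorem isOpen_basin (hf : Continuous f) (hV : IsOpen V) : IsOpen (basin f V) :=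
  isOpen_iUnion fun n => hV.preimage (hf.iterate n)

theorem isClopen_basinUpTo (hf : Continuous f) (hV : IsClopen V) (N : ℕ) :
    IsClopen (basinUpTo f V N) :=
  (finite_Iic N).isClopen_biUnion fun n _ => hV.preimage (hf.iterate n)

theorem IsCompact.exists_subset_basinUpTo {K : Set X} (hK : IsCompact K)
    (hf : Continuous f) (hV : IsOpen V) (hKB : K ⊆ basin f V) :
    ∃ N, K ⊆ basinUpTo f V N :=
  hK.elim_directed_cover _ (fun N => isOpen_biUnion fun n _ => hV.preimage (hf.iterate n))
    (by rwa [iUnion_accumulate]) monotone_accumulate.directed_le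

theorem IsMinimalSubsystem.subset_of_inter_nonempty {Y O : Set X}
    (hY : IsMinimalSubsystem f Y) (hO : IsOpen O) (hfO : f ⁻¹' O ⊆ O) (hYO : (Y ∩ O).Nonempty) :
    Y ⊆ O := by
  by_contra hsub
  have hdiff : Y \ O = Y := by
    refine hY.2.2.2 (Y \ O) sdiff_subset (sdiff_nonempty.mpr hsub) (hY.2.1.sdiff hO) ?_
    rintro _ ⟨y, ⟨hy, hyO⟩, rfl⟩
    exact ⟨hY.2.2.1 (mem_image_of_mem f hy), fun h => hyO (hfO h)⟩
  obtain ⟨y, hyY, hyO⟩ := hYO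
  exact (hdiff.symm ▸ hyY : y ∈ Y \ O).2 hyO

theorem IsMinimalSubsystem.isCompact_inter [CompactSpace X] {Y O : Set X}
    (hY : IsMinimalSubsystem f Y) (hO : IsOpen O) (hfO : f ⁻¹' O ⊆ O) : IsCompact (Y ∩ O) := by
  rcases (Y ∩ O).eq_empty_or_nonempty with h | h
  · exact h ▸ isCompact_empty
  · rw [inter_eq_left.mpr (hY.subset_of_inter_nonempty hO hfO h)]
    exact hY.2.1.isCompact

theorem exists_basin_eq_basinUpTo [CompactSpace X] [T2Space X] (hf : Continuous f)
    (hV : IsClopen V) {M : ℕ}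
    (hM : limitSet f ∩ basin f V ⊆ basinUpTo f V M) :
    ∃ N, basin f V = basinUpTo f V N := by
  by_contra! hne
  set D := f^[M + 1] ⁻¹' V \ basinUpTo f V M
  have hD : IsClosed D :=
    (hV.isClosed.preimage (hf.iterate _)).sdiff (isClopen_basinUpTo hf hV M).2
  have hnonempty : ∀ n, (D ∩ range f^[n]).Nonempty := by
    intro n
    obtain ⟨x, hx, hxN⟩ :=
      exists_of_ssubset ((basinUpTo_subset_basin (n + M)).ssubset_of_ne (hne _).symm)
    obtain ⟨z, hzn, hzD⟩ := exists_mem_range_iterate_first_entrance_succ hx hxN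
    exact ⟨z, hzD, hzn⟩
  obtain ⟨z, hz⟩ := IsCompact.nonempty_iInter_of_sequence_nonempty_isCompact_isClosed _
    (fun n => inter_subset_inter_right D (range_iterate_add_subset f n 1)) hnonempty
    (hD.inter (isCompact_range (hf.iterate 0)).isClosed).isCompact
    (fun n => hD.inter (isCompact_range (hf.iterate n)).isClosed)
  rw [← inter_iInter, mem_inter_iff] at hz
  exact hz.1.2 (hM ⟨hz.2, mem_iUnion.mpr ⟨M + 1, hz.1.1⟩⟩)

end Basins

theorem clopen_basins_of_limit_set_finite_union_minimal_general (X : Type*) [MetricSpace X]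
    [CompactSpace X]
    (f : X → X) (hf : Continuous f)
    (k : ℕ) (Y : Fin k → Set X)
    (hmin : ∀ i, IsMinimalSubsystem f (Y i))
    (hlimit : (⋂ n : ℕ, f^[n] '' Set.univ) = ⋃ i, Y i) :
    ∀ V : Set X, IsClopen V → IsClopen (⋃ n : ℕ, f^[n] ⁻¹' V) := by
  intro V hV
  have hlimit_basin : limitSet f ∩ basin f V ⊆ ⋃ i, Y i ∩ basin f V := by
    simp only [limitSet, ← image_univ, hlimit, iUnion_inter, subset_rfl]
  have hcompact : IsCompact (⋃ i, Y i ∩ basin f V) := isCompact_iUnion fun i =>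
    (hmin i).isCompact_inter (isOpen_basin hf hV.isOpen) preimage_basin_subset
  obtain ⟨M, hM⟩ :=
    hcompact.exists_subset_basinUpTo hf hV.isOpen (iUnion_subset fun _ => inter_subset_right)
  obtain ⟨N, hN⟩ := exists_basin_eq_basinUpTo hf hV (hlimit_basin.trans hM)
  change IsClopen (basin f V)
  exact hN ▸ isClopen_basinUpTo hf hV N

/-- If the limit set of a compact symbolic system is a finite union of pairwise
disjoint minimal subsystems, then the system has clopen basins. -/
theorem clopen_basins_of_limit_set_finite_union_minimal (X : Type*) [MetricSpace X]
    [CompactSpace X]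
    (hbasis : TopologicalSpace.IsTopologicalBasis {s : Set X | IsClopen s})
    (f : X → X) (hf : Continuous f)
    (k : ℕ) (Y : Fin k → Set X)
    (hmin : ∀ i, IsMinimalSubsystem f (Y i))
    (hdisj : ∀ i j, i ≠ j → Disjoint (Y i) (Y j))
    (hlimit : (⋂ n : ℕ, f^[n] '' Set.univ) = ⋃ i, Y i) :
    ∀ V : Set X, IsClopen V → IsClopen (⋃ n : ℕ, f^[n] ⁻¹' V) :=
  clopen_basins_of_limit_set_finite_union_minimal_general X f hf k Y hmin hlimit
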